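/- Let A(n) = ⌊nφ⌋ and B(n) = ⌊nφ²⌋ for n ≥ 1. Let U be any nonempty composition of the sequences A and B (i.e., U = C₁ ∘ C₂ ∘ … ∘ C_m with each C_ℓ ∈ {A, B}, m ≥ 1), containing i occurrences of A and j occurrences of B. Then there exists an integer constant λ_U such that for all n ≥ 1, U(n) = F_{i+2j}·A(n) + F_{i+2j−1}·n − λ_U. -/

import Mathlib

/-!
Since `φ² = φ + 1` we have `B(n) = A(n) + n`, and with `x = nφ - A(n) ∈ (0, 1)` one gets
`A(n) φ = A(n) + n - x (φ - 1)`, whence `A(A(n)) = A(n) + n - 1` and `A(B(n)) = 2 A(n) + n`.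
So if `U(n) = a A(n) + b n - λ` for `n ≥ 1`, then `U ∘ A` and `U ∘ B` have the same shape with
`(a, b)` replaced by `(a + b, a)` and `(2a + b, a + b)`: one and two steps of the Fibonacci
recursion on `(F_k, F_{k-1})`, starting from the identity `(F_0, F_{-1}) = (0, 1)`.
-/

noncomputable def phi : ℝ := (1 + Real.sqrt 5) / 2

/-- The lower Wythoff sequence `A(n) = ⌊nφ⌋`, as a map `ℕ → ℕ`. -/
noncomputable def wA (n : ℕ) : ℕ := ⌊(n : ℝ) * phi⌋₊

/-- The upper Wythoff sequence `B(n) = ⌊nφ²⌋`, as a map `ℕ → ℕ`. -/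
noncomputable def wB (n : ℕ) : ℕ := ⌊(n : ℝ) * phi ^ 2⌋₊

open Real

lemma phi_sq : phi ^ 2 = phi + 1 := goldenRatio_sq

lemma one_lt_phi : 1 < phi := one_lt_goldenRatio

lemma phi_lt_two : phi < 2 := goldenRatio_lt_two

lemma mul_phi_nonneg (n : ℕ) : 0 ≤ (n : ℝ) * phi :=
  mul_nonneg n.cast_nonneg (zero_lt_one.trans one_lt_phi).le

lemma natCast_wA (n : ℕ) : (wA n : ℤ) = ⌊(n : ℝ) * phi⌋ :=
  Int.natCast_floor_eq_floor (mul_phi_nonneg n)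

lemma wB_eq_wA_add (n : ℕ) : wB n = wA n + n := by
  rw [wA, wB, phi_sq, mul_add, mul_one, Nat.floor_add_natCast (mul_phi_nonneg n)]

lemma one_le_wA {n : ℕ} (hn : 1 ≤ n) : 1 ≤ wA n := by
  refine Nat.le_floor ?_
  have : (1 : ℝ) ≤ n := by exact_mod_cast hn
  push_cast
  nlinarith [one_lt_phi]

lemma one_le_wB {n : ℕ} (hn : 1 ≤ n) : 1 ≤ wB n := by
  rw [wB_eq_wA_add]
  omega

lemma wA_le_mul_phi (n : ℕ) : (wA n : ℝ) ≤ n * phi :=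
  Nat.floor_le (mul_phi_nonneg n)

lemma wA_lt_mul_phi {n : ℕ} (hn : 1 ≤ n) : (wA n : ℝ) < n * phi :=
  (wA_le_mul_phi n).lt_of_ne fun h ↦
    (goldenRatio_irrational.natCast_mul (by omega)).ne_nat (wA n) h.symm

lemma mul_phi_lt_wA_add_one (n : ℕ) : (n : ℝ) * phi < wA n + 1 :=
  Nat.lt_floor_add_one _

lemma wA_mul_phi (n : ℕ) :
    (wA n : ℝ) * phi = wA n + n - (n * phi - wA n) * (phi - 1) := by
  linear_combination (n : ℝ) * phi_sq

lemma wA_wA {n : ℕ} (hn : 1 ≤ n) : (wA (wA n) : ℤ) = wA n + n - 1 := by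
  have hx₀ := wA_lt_mul_phi hn
  have hx₁ := mul_phi_lt_wA_add_one n
  rw [natCast_wA, Int.floor_eq_iff, wA_mul_phi]
  push_cast
  constructor <;> nlinarith [one_lt_phi, phi_lt_two]

lemma wA_wB (n : ℕ) : (wA (wB n) : ℤ) = 2 * wA n + n := by
  have hx₀ := wA_le_mul_phi n
  have hx₁ := mul_phi_lt_wA_add_one n
  rw [natCast_wA, Int.floor_eq_iff, wB_eq_wA_add, Nat.cast_add, add_mul, wA_mul_phi]
  push_cast
  constructor <;> nlinarith [one_lt_phi, phi_lt_two]

def IsWythoffAffine (U : ℕ → ℕ) (a b : ℤ) : Prop :=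
  ∃ lam : ℤ, ∀ n, 1 ≤ n → (U n : ℤ) = a * wA n + b * n - lam

namespace IsWythoffAffine

variable {U : ℕ → ℕ} {a b : ℤ}

theorem comp_wA (h : IsWythoffAffine U a b) : IsWythoffAffine (U ∘ wA) (a + b) a := by
  obtain ⟨lam, hU⟩ := h
  refine ⟨lam + a, fun n hn ↦ ?_⟩
  rw [Function.comp_apply, hU _ (one_le_wA hn), wA_wA hn]
  ring

theorem comp_wB (h : IsWythoffAffine U a b) :
    IsWythoffAffine (U ∘ wB) (2 * a + b) (a + b) := by
  obtain ⟨lam, hU⟩ := h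
  refine ⟨lam, fun n hn ↦ ?_⟩
  rw [Function.comp_apply, hU _ (one_le_wB hn), wA_wB, wB_eq_wA_add]
  push_cast
  ring

end IsWythoffAffine

noncomputable def wythoffComp (L : List Bool) : ℕ → ℕ :=
  L.foldr (fun b f ↦ (if b then wA else wB) ∘ f) id

def wythoffWeight (L : List Bool) : ℕ :=
  L.count true + 2 * L.count false

lemma wythoffComp_append_singleton (L : List Bool) (b : Bool) :
    wythoffComp (L ++ [b]) = wythoffComp L ∘ (if b then wA else wB) := by
  induction L with
  | nil => rfl
  | cons c L ih =>
    simp only [wythoffComp, List.cons_append, List.foldr_cons] at ih ⊢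
    rw [ih]
    rfl

lemma wythoffWeight_append_true (L : List Bool) :
    wythoffWeight (L ++ [true]) = wythoffWeight L + 1 := by
  simp [wythoffWeight, List.count_append, add_right_comm]

lemma wythoffWeight_append_false (L : List Bool) :
    wythoffWeight (L ++ [false]) = wythoffWeight L + 2 := by
  simp [wythoffWeight, List.count_append, mul_add, add_assoc]

lemma wythoffWeight_pos {L : List Bool} (hL : L ≠ []) : 0 < wythoffWeight L := by
  have := List.count_false_add_count_true L
  have := List.length_pos_of_ne_nil hL
  unfold wythoffWeight
  omega

/-- `F_{k+1} - F_k` stands for `F_{k-1}`; unlike `Nat.fib (k - 1)` it is right at `k = 0`. -/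
theorem isWythoffAffine_wythoffComp (L : List Bool) :
    IsWythoffAffine (wythoffComp L) (Nat.fib (wythoffWeight L))
      (Nat.fib (wythoffWeight L + 1) - Nat.fib (wythoffWeight L)) := by
  induction L using List.reverseRecOn with
  | nil => exact ⟨0, fun n _ ↦ by simp [wythoffComp, wythoffWeight]⟩
  | append_singleton L b ih =>
    rw [wythoffComp_append_singleton]
    cases b
    · rw [wythoffWeight_append_false, if_neg Bool.false_ne_true]
      convert ih.comp_wB using 1 <;> push_cast [Nat.fib_add_two] <;> ring
    · rw [wythoffWeight_append_true, if_pos rfl]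
      convert ih.comp_wA using 1 <;> push_cast [Nat.fib_add_two] <;> ring

theorem carlitz_scoville_hoggatt (L : List Bool) (hL : L ≠ []) :
    ∃ lam : ℤ, ∀ n : ℕ, 1 ≤ n →
      (((L.foldr (fun b f => (if b then wA else wB) ∘ f) (id : ℕ → ℕ)) n : ℕ) : ℤ)
        = (Nat.fib (L.count true + 2 * L.count false) : ℤ) * (wA n : ℤ)
          + (Nat.fib (L.count true + 2 * L.count false - 1) : ℤ) * (n : ℤ) - lam := by
  have hfib : (Nat.fib (wythoffWeight L + 1) : ℤ) - Nat.fib (wythoffWeight L)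
      = Nat.fib (wythoffWeight L - 1) := by
    rw [Nat.fib_add_one (wythoffWeight_pos hL).ne']
    push_cast
    ring
  obtain ⟨lam, h⟩ := isWythoffAffine_wythoffComp L
  rw [hfib] at h
  exact ⟨lam, h⟩
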